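/- arXiv:1504.06713 — 3 statements merged into one kernel-verified Lean document; each statement's English description precedes it below -/
import Mathlib

section
/- Let G be a finite connected loopless multigraph with vertex set V and Laplacian Q(G). If D and D' are equivalent effective divisors on G with D ≠ D', then there exists a chain of vertex subsets ∅ ⊊ U₁ ⊆ U₂ ⊆ ⋯ ⊆ U_k ⊊ V such that for every t with 1 ≤ t ≤ k, the divisor D_t := D − Q(G)·(𝟙_{U₁} + ⋯ + 𝟙_{U_t}) is effective, and D_k = D'. -/
open Finset
open scoped Classical

variable {V : Type*}

/-- Laplacian of the multigraph with edge multiplicity function `m`, applied to `x`. -/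
def lap [Fintype V] (m : V → V → ℕ) (x : V → ℤ) : V → ℤ :=
  fun u => (∑ w, (m u w : ℤ)) * x u - ∑ w, (m u w : ℤ) * x w

/-- A divisor is effective if it is nonnegative. -/
def Effective (D : V → ℤ) : Prop := ∀ v, 0 ≤ D v

/-- Linear equivalence of divisors. -/
def DivEquiv [Fintype V] (m : V → V → ℕ) (D D' : V → ℤ) : Prop :=
  ∃ x : V → ℤ, D - D' = lap m x

/-- Degree of a divisor. -/
def divDeg [Fintype V] (D : V → ℤ) : ℤ := ∑ v, D v

/-- Indicator vector of a subset. -/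
def indVec [DecidableEq V] (U : Finset V) : V → ℤ := fun v => if v ∈ U then 1 else 0

/-- The underlying graph of the multigraph is connected. -/
def Conn [Fintype V] (m : V → V → ℕ) : Prop :=
  (SimpleGraph.fromRel fun u v => m u v ≠ 0).Connected

/-- The equivalence relation `≡_D` on vertices. -/
def DEquiv [Fintype V] (m : V → V → ℕ) (D : V → ℤ) (u v : V) : Prop :=
  ∀ x : V → ℤ, Effective (D - lap m x) → x u = x v

/-- Rank of a divisor. -/
noncomputable def divRank [Fintype V] (m : V → V → ℕ) (D : V → ℤ) : ℤ :=
  if ∃ D' : V → ℤ, DivEquiv m D D' ∧ Effective D' then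
    sSup {k : ℤ | 0 ≤ k ∧ ∀ E : V → ℤ, Effective E → divDeg E ≤ k →
      ∃ D' : V → ℤ, DivEquiv m (D - E) D' ∧ Effective D'}
  else -1

/-- Gonality of the multigraph. -/
noncomputable def dgon (V : Type*) [Fintype V] (m : V → V → ℕ) : ℤ :=
  sInf {d : ℤ | ∃ D : V → ℤ, 1 ≤ divRank m D ∧ divDeg D = d}

/-! Write `D - D' = Q x` with `0 ≤ x ≤ k`, where `x` vanishes somewhere and equals `k > 0`
somewhere. Firing the superlevel sets `{x ≥ k} ⊆ {x ≥ k - 1} ⊆ ⋯ ⊆ {x ≥ 1}` one after another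
fires `x` in total, and the first `t` of them fire the truncation `max 0 (x - (k - t))`.
Truncating a script that leads from one effective divisor to another keeps every
intermediate divisor effective. -/

section

variable [Fintype V] (m : V → V → ℕ)

lemma lap_apply_eq_sum (x : V → ℤ) (u : V) :
    lap m x u = ∑ w, (m u w : ℤ) * (x u - x w) := by
  rw [lap, sum_mul, ← sum_sub_distrib]
  exact sum_congr rfl fun w _ => by ring

lemma lap_zero : lap m 0 = 0 := by
  funext u
  simp [lap]

lemma lap_sub_const (x : V → ℤ) (c : ℤ) : lap m (fun v => x v - c) = lap m x := by
  funext u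
  simp only [lap_apply_eq_sum, sub_sub_sub_cancel_right]

lemma lap_apply_le_of_forall_sub_le {x y : V → ℤ} {v : V}
    (h : ∀ w, y v - y w ≤ x v - x w) : lap m y v ≤ lap m x v := by
  rw [lap_apply_eq_sum, lap_apply_eq_sum]
  exact sum_le_sum fun w _ => mul_le_mul_of_nonneg_left (h w) (by positivity)

/-- At a vertex below the threshold the truncation `y` is minimal, so the vertex only gains
chips; above it, every difference `y v - y w` is at most `x v - x w`. -/
lemma effective_sub_lap_truncate {D x : V → ℤ} (hD : Effective D)
    (hDx : Effective (D - lap m x)) (c : ℤ) :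
    Effective (D - lap m (fun v => max 0 (x v - c))) := by
  intro v
  by_cases hv : x v ≤ c
  · have hle : lap m (fun v => max 0 (x v - c)) v ≤ lap m 0 v :=
      lap_apply_le_of_forall_sub_le m fun w => by simp only [Pi.zero_apply]; omega
    have := hD v
    simp only [lap_zero, Pi.zero_apply] at hle
    simp only [Pi.sub_apply]
    linarith
  · have hle : lap m (fun v => max 0 (x v - c)) v ≤ lap m x v :=
      lap_apply_le_of_forall_sub_le m fun w => by omega
    have := hDx v
    simp only [Pi.sub_apply] at this ⊢
    linarith

lemma exists_normalized_potential [Nonempty V] {D D' : V → ℤ} (h : DivEquiv m D D') :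
    ∃ (x : V → ℤ) (k : ℕ), D - lap m x = D' ∧ (∀ v, 0 ≤ x v ∧ x v ≤ k) ∧
      (∃ v, x v = 0) ∧ ∃ v, x v = k := by
  obtain ⟨x, hx⟩ := h
  obtain ⟨v₀, hmin⟩ := Finite.exists_min x
  obtain ⟨v₁, hmax⟩ := Finite.exists_max x
  refine ⟨fun v => x v - x v₀, (x v₁ - x v₀).toNat, ?_, fun v => ?_, ⟨v₀, sub_self _⟩, v₁, ?_⟩
  · rw [lap_sub_const, ← hx, sub_sub_cancel]
  · have := hmin v
    have := hmax v
    dsimp only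
    omega
  · have := hmin v₁
    dsimp only
    omega

def superlevel (x : V → ℤ) (c : ℤ) : Finset V := {v | c ≤ x v}

@[simp]
lemma mem_superlevel {x : V → ℤ} {c : ℤ} {v : V} : v ∈ superlevel x c ↔ c ≤ x v := by
  simp [superlevel]

lemma superlevel_anti (x : V → ℤ) : Antitone (superlevel x) := by
  intro c c' hc v hv
  rw [mem_superlevel] at hv ⊢
  omega

lemma sum_indVec_superlevel [DecidableEq V] {x : V → ℤ} {M : ℤ} (hx : ∀ v, x v ≤ M) (n : ℕ) :
    ∑ i ∈ range n, indVec (superlevel x (M - i)) = fun v => max 0 (x v - (M - n)) := by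
  funext v
  induction n with
  | zero => simp [hx v]
  | succ n ih =>
    rw [sum_range_succ, Pi.add_apply, ih]
    simp only [indVec, mem_superlevel]
    split_ifs <;> omega

end

lemma Fin.sum_Iic_eq_sum_range {M : Type*} [AddCommMonoid M] {k : ℕ} (f : ℕ → M) (t : Fin k) :
    ∑ i ∈ Iic t, f i = ∑ n ∈ range (t + 1), f n := by
  rw [Nat.range_succ_eq_Iic, ← Fin.map_valEmbedding_Iic, sum_map]
  rfl

theorem chain_of_firing_sets_general [Fintype V] [DecidableEq V] (m : V → V → ℕ)
    (D D' : V → ℤ) (hD : Effective D) (hD' : Effective D')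
    (hequiv : DivEquiv m D D') (hne : D ≠ D') :
    ∃ (k : ℕ) (hk : 0 < k) (U : Fin k → Finset V),
      Monotone U ∧
      (U ⟨0, hk⟩).Nonempty ∧
      U ⟨k - 1, Nat.sub_lt hk one_pos⟩ ≠ Finset.univ ∧
      (∀ t : Fin k, Effective (D - lap m (∑ i ∈ Finset.Iic t, indVec (U i)))) ∧
      D - lap m (∑ i : Fin k, indVec (U i)) = D' := by
  have : Nonempty V := not_isEmpty_iff.mp fun h => hne (funext h.elim)
  obtain ⟨x, k, hx, hbounds, ⟨v₀, hv₀⟩, ⟨v₁, hv₁⟩⟩ := exists_normalized_potential m hequiv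
  have hk : 0 < k := by
    refine Nat.pos_of_ne_zero fun hk => hne ?_
    have hx0 : x = 0 := funext fun v => by
      have := hbounds v
      simp only [hk, Pi.zero_apply] at this ⊢
      omega
    rwa [hx0, lap_zero, sub_zero] at hx
  have hxk : ∀ v, x v ≤ k := fun v => (hbounds v).2
  refine ⟨k, hk, fun i => superlevel x (k - i),
    fun i j hij => superlevel_anti x (sub_le_sub_left (by exact_mod_cast hij) _),
    ⟨v₁, by simp [hv₁]⟩, fun h => ?_, fun t => ?_, ?_⟩
  · have := h ▸ mem_univ v₀
    rw [mem_superlevel] at this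
    omega
  · rw [Fin.sum_Iic_eq_sum_range (fun i : ℕ => indVec (superlevel x (k - i))),
      sum_indVec_superlevel hxk]
    exact effective_sub_lap_truncate m hD (hx ▸ hD') _
  · rw [Fin.sum_univ_eq_sum_range (fun i : ℕ => indVec (superlevel x (k - i))),
      sum_indVec_superlevel hxk, ← hx]
    congr 2
    funext v
    have := hbounds v
    omega

/-- Lemma 1 (chain of firing sets): if `D` and `D'` are equivalent effective divisors with
`D ≠ D'`, there is a chain `∅ ⊊ U₁ ⊆ ⋯ ⊆ U_k ⊊ V` such that each partial firing keeps the
divisor effective and the final result is `D'`. -/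
theorem chain_of_firing_sets [Fintype V] [DecidableEq V] (m : V → V → ℕ)
    (hsymm : ∀ u v, m u v = m v u) (hloop : ∀ v, m v v = 0) (hconn : Conn m)
    (D D' : V → ℤ) (hD : Effective D) (hD' : Effective D')
    (hequiv : DivEquiv m D D') (hne : D ≠ D') :
    ∃ (k : ℕ) (hk : 0 < k) (U : Fin k → Finset V),
      Monotone U ∧
      (U ⟨0, hk⟩).Nonempty ∧
      U ⟨k - 1, Nat.sub_lt hk one_pos⟩ ≠ Finset.univ ∧
      (∀ t : Fin k, Effective (D - lap m (∑ i ∈ Finset.Iic t, indVec (U i)))) ∧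
      D - lap m (∑ i : Fin k, indVec (U i)) = D' :=
  chain_of_firing_sets_general m D D' hD hD' hequiv hne
end

section
/- Let G be a finite connected loopless multigraph with vertex set V, let D be an effective divisor on G, and let u, v ∈ V. Then u ≢_D v if and only if there exist an effective divisor D' equivalent to D and a subset U ⊆ V with u ∈ U and v ∉ U such that D' − Q(G)·𝟙_U is effective. -/
open Finset
open scoped Classical

variable {V : Type*}

lemma lap_apply' [Fintype V] (m : V → V → ℕ) (x : V → ℤ) (u : V) :
    lap m x u = ∑ w, (m u w : ℤ) * (x u - x w) := by
  simp [lap, mul_sub, Finset.sum_sub_distrib, Finset.sum_mul]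

lemma lap_add' [Fintype V] (m : V → V → ℕ) (x y : V → ℤ) (u : V) :
    lap m (fun w => x w + y w) u = lap m x u + lap m y u := by
  rw [lap_apply', lap_apply', lap_apply', ← Finset.sum_add_distrib]
  exact Finset.sum_congr rfl fun w _ => by ring

lemma lap_zero' [Fintype V] (m : V → V → ℕ) (u : V) :
    lap m (fun _ => (0:ℤ)) u = 0 := by simp [lap]

lemma indVec_compl [Fintype V] [DecidableEq V] (U : Finset V) (w : V) :
    indVec Uᶜ w = 1 - indVec U w := by
  by_cases h : w ∈ U <;> simp [indVec, h]

lemma lap_indVec_compl [Fintype V] [DecidableEq V] (m : V → V → ℕ) (U : Finset V) (w : V) :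
    lap m (indVec Uᶜ) w = - lap m (indVec U) w := by
  rw [lap_apply', lap_apply', ← Finset.sum_neg_distrib]
  exact Finset.sum_congr rfl fun w' _ => by rw [indVec_compl, indVec_compl]; ring

lemma fire_top [Fintype V] [DecidableEq V] (m : V → V → ℕ) (E x : V → ℤ)
    (hE : Effective E) (hEx : Effective (E - lap m x)) (S : ℤ) (hS : ∀ w, x w ≤ S) :
    Effective (E - lap m (indVec (univ.filter fun w => x w = S))) := by
  intro w
  set U := univ.filter fun w => x w = S with hU
  simp only [Pi.sub_apply]
  by_cases hw : w ∈ U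
  · have hxw : x w = S := by simpa [hU] using hw
    have hle : lap m (indVec U) w ≤ lap m x w := by
      rw [lap_apply', lap_apply']
      apply Finset.sum_le_sum
      intro w' _
      apply mul_le_mul_of_nonneg_left _ (Int.natCast_nonneg _)
      by_cases hw' : w' ∈ U
      · have hx' : x w' = S := by simpa [hU] using hw'
        simp [indVec, hw, hw', hxw, hx']
      · have h1 : x w' ≠ S := by simpa [hU] using hw'
        have h2 : x w' ≤ S := hS w'
        simp only [indVec, if_pos hw, if_neg hw']
        omega
    have h3 := hEx w
    simp only [Pi.sub_apply] at h3
    linarith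
  · have hle : lap m (indVec U) w ≤ 0 := by
      rw [lap_apply']
      apply Finset.sum_nonpos
      intro w' _
      apply mul_nonpos_of_nonneg_of_nonpos (Int.natCast_nonneg _)
      simp only [indVec, if_neg hw]
      split <;> omega
    have := hE w
    linarith

lemma key_fire [Fintype V] [DecidableEq V] (m : V → V → ℕ) (u v : V) :
    ∀ n : ℕ, ∀ E x : V → ℤ, Effective E → Effective (E - lap m x) → x v < x u →
      (univ.sup' ⟨u, mem_univ u⟩ x - univ.inf' ⟨u, mem_univ u⟩ x).toNat ≤ n →
      ∃ (U : Finset V) (y : V → ℤ), u ∈ U ∧ v ∉ U ∧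
        Effective (E - lap m y) ∧ Effective (E - lap m y - lap m (indVec U)) := by
  intro n
  induction n with
  | zero =>
    intro E x hE hEx huv hn
    exfalso
    have h1 : x u ≤ univ.sup' ⟨u, mem_univ u⟩ x := le_sup' x (mem_univ u)
    have h2 : univ.inf' ⟨u, mem_univ u⟩ x ≤ x v := inf'_le x (mem_univ v)
    omega
  | succ n ih =>
    intro E x hE hEx huv hn
    set S := univ.sup' ⟨u, mem_univ u⟩ x with hSdef
    set U := univ.filter fun w => x w = S with hU
    have hS : ∀ w, x w ≤ S := fun w => le_sup' x (mem_univ w)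
    have hvU : v ∉ U := by
      simp only [hU, mem_filter, mem_univ, true_and]
      intro h
      have := hS u
      omega
    have hfire := fire_top m E x hE hEx S hS
    by_cases hu : u ∈ U
    · refine ⟨U, fun _ => 0, hu, hvU, ?_, ?_⟩
      · intro w; simpa [Pi.sub_apply, lap_zero'] using hE w
      · intro w
        have := hfire w
        simp only [Pi.sub_apply] at this ⊢
        rw [lap_zero']
        linarith
    · have hxu : x u < S := lt_of_le_of_ne (hS u) (by simpa [hU] using hu)
      set x1 : V → ℤ := fun w => x w - indVec U w with hx1
      have hxsplit : x = fun w => x1 w + indVec U w := by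
        funext w; simp [hx1]
      have hEx1 : Effective (E - lap m (indVec U) - lap m x1) := by
        intro w
        have h := hEx w
        rw [hxsplit] at h
        simp only [Pi.sub_apply] at h ⊢
        rw [lap_add'] at h
        linarith
      have hx1uv : x1 v < x1 u := by
        simp only [hx1, indVec, if_neg hu, if_neg hvU]
        omega
      have hmeas : (univ.sup' ⟨u, mem_univ u⟩ x1 - univ.inf' ⟨u, mem_univ u⟩ x1).toNat ≤ n := by
        have hs1 : univ.sup' ⟨u, mem_univ u⟩ x1 ≤ S - 1 := by
          apply sup'_le
          intro w _
          by_cases hw : w ∈ U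
          · have : x w = S := by simpa [hU] using hw
            simp only [hx1, indVec, if_pos hw]
            omega
          · have h1 : x w ≠ S := by simpa [hU] using hw
            have h2 : x w ≤ S := hS w
            simp only [hx1, indVec, if_neg hw]
            omega
        have hi1 : univ.inf' ⟨u, mem_univ u⟩ x ≤ univ.inf' ⟨u, mem_univ u⟩ x1 := by
          apply le_inf'
          intro w _
          by_cases hw : w ∈ U
          · have hiu : univ.inf' ⟨u, mem_univ u⟩ x ≤ x u := inf'_le x (mem_univ u)
            simp only [hx1, indVec, if_pos hw]
            have : x w = S := by simpa [hU] using hw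
            omega
          · have : univ.inf' ⟨u, mem_univ u⟩ x ≤ x w := inf'_le x (mem_univ w)
            simp only [hx1, indVec, if_neg hw]
            omega
        omega
      obtain ⟨U', y, h1, h2, h3, h4⟩ :=
        ih (E - lap m (indVec U)) x1 hfire hEx1 hx1uv hmeas
      refine ⟨U', fun w => y w + indVec U w, h1, h2, ?_, ?_⟩
      · intro w
        have := h3 w
        simp only [Pi.sub_apply] at this ⊢
        rw [show (fun w => y w + indVec U w) = (fun w => indVec U w + y w) from funext fun w => by ring,
          lap_add']
        linarith
      · intro w
        have := h4 w
        simp only [Pi.sub_apply] at this ⊢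
        rw [show (fun w => y w + indVec U w) = (fun w => indVec U w + y w) from funext fun w => by ring,
          lap_add']
        linarith

/-- Lemma 2 (first part): `u ≢_D v` iff for some effective divisor `D' ∼ D` one can fire on a
set `U` containing `u` but not `v`. -/
theorem not_dequiv_iff_fire [Fintype V] [DecidableEq V] (m : V → V → ℕ)
    (hsymm : ∀ u v, m u v = m v u) (hloop : ∀ v, m v v = 0) (hconn : Conn m)
    (D : V → ℤ) (hD : Effective D) (u v : V) :
    ¬ DEquiv m D u v ↔
      ∃ (D' : V → ℤ) (U : Finset V), DivEquiv m D D' ∧ Effective D' ∧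
        u ∈ U ∧ v ∉ U ∧ Effective (D' - lap m (indVec U)) := by
  constructor
  · intro h
    simp only [DEquiv] at h
    push_neg at h
    obtain ⟨x, hx, hne⟩ := h
    rcases lt_or_gt_of_ne hne with hlt | hgt
    · obtain ⟨U, y, hvU, huU, hEy, hEyU⟩ := key_fire m v u _ D x hD hx hlt le_rfl
      refine ⟨D - lap m y - lap m (indVec U), Uᶜ, ⟨fun w => y w + indVec U w, ?_⟩, hEyU,
        Finset.mem_compl.2 huU, by simp [hvU], ?_⟩
      · funext w
        simp only [Pi.sub_apply]
        rw [lap_add']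
        ring
      · intro w
        have := hEy w
        simp only [Pi.sub_apply] at this ⊢
        rw [lap_indVec_compl]
        linarith
    · obtain ⟨U, y, huU, hvU, hEy, hEyU⟩ := key_fire m u v _ D x hD hx hgt le_rfl
      exact ⟨D - lap m y, U, ⟨y, by funext w; simp⟩, hEy, huU, hvU, hEyU⟩
  · rintro ⟨D', U, ⟨x, hx⟩, hD', hu, hv, hfire⟩ hde
    have hD'eq : D' = D - lap m x := by
      funext w
      have := congrFun hx w
      simp only [Pi.sub_apply] at this ⊢
      linarith
    have h1 : x u = x v := hde x (by rw [← hD'eq]; exact hD')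
    have h2 : (fun w => x w + indVec U w) u = (fun w => x w + indVec U w) v := by
      apply hde
      intro w
      have := hfire w
      rw [hD'eq] at this
      simp only [Pi.sub_apply] at this ⊢
      rw [lap_add']
      linarith
    simp only [indVec, if_pos hu, if_neg hv] at h2
    omega
end

section
/- Let G be a finite connected loopless multigraph with vertex set V, let D be an effective divisor on G of degree deg(D) = Σ_v D(v), and let u, v be distinct vertices. If every u–v cut has more than deg(D) edges (i.e., for every subset U ⊆ V with u ∈ U and v ∉ U, the number of edges |E(U, V∖U)| = Σ_{a∈U, b∉U} m(a,b) exceeds deg(D)), then u ≡_D v. -/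
open Finset
open scoped Classical

variable {V : Type*}

lemma sum_lap_eq [Fintype V] [DecidableEq V] (m : V → V → ℕ)
    (hsymm : ∀ u v, m u v = m v u) (x : V → ℤ) (U : Finset V) :
    ∑ w ∈ U, lap m x w = ∑ a ∈ U, ∑ b ∈ Uᶜ, (m a b : ℤ) * (x a - x b) := by
  have h1 : ∀ w, lap m x w = ∑ b, (m w b : ℤ) * (x w - x b) := by
    intro w
    simp [lap, mul_sub, Finset.sum_sub_distrib, Finset.sum_mul]
  have hsplit : ∑ w ∈ U, lap m x w =
      (∑ a ∈ U, ∑ b ∈ U, (m a b : ℤ) * (x a - x b)) +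
      ∑ a ∈ U, ∑ b ∈ Uᶜ, (m a b : ℤ) * (x a - x b) := by
    rw [← Finset.sum_add_distrib]
    refine Finset.sum_congr rfl fun w _ => ?_
    rw [h1 w, ← Finset.sum_add_sum_compl U]
  have hzero : (∑ a ∈ U, ∑ b ∈ U, (m a b : ℤ) * (x a - x b)) = 0 := by
    have hneg : (∑ a ∈ U, ∑ b ∈ U, (m a b : ℤ) * (x a - x b)) =
        -(∑ a ∈ U, ∑ b ∈ U, (m a b : ℤ) * (x a - x b)) := by
      nth_rewrite 1 [Finset.sum_comm]
      rw [← Finset.sum_neg_distrib]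
      refine Finset.sum_congr rfl fun a _ => ?_
      rw [← Finset.sum_neg_distrib]
      refine Finset.sum_congr rfl fun b _ => ?_
      rw [hsymm b a]; ring
    linarith
  rw [hsplit, hzero, zero_add]

/-- Lemma 2 (second part): if every `u`–`v` cut has more than `deg D` edges, then `u ≡_D v`. -/
theorem dequiv_of_large_cuts [Fintype V] [DecidableEq V] (m : V → V → ℕ)
    (hsymm : ∀ u v, m u v = m v u) (hloop : ∀ v, m v v = 0) (hconn : Conn m)
    (D : V → ℤ) (hD : Effective D) (u v : V) (huv : u ≠ v)
    (hcut : ∀ U : Finset V, u ∈ U → v ∉ U →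
      divDeg D < ∑ a ∈ U, ∑ b ∈ Uᶜ, (m a b : ℤ)) :
    DEquiv m D u v := by
  intro x hx
  by_contra hne
  have hle : ∀ w, lap m x w ≤ D w := fun w => by
    have := hx w; simp only [Pi.sub_apply] at this; linarith
  rcases lt_or_gt_of_ne hne with hlt | hlt
  · -- x u < x v : use U = {w | x w ≤ x u}
    set U : Finset V := Finset.univ.filter (fun w => x w ≤ x u) with hU
    have hu : u ∈ U := by simp [hU]
    have hv : v ∉ U := by simp [hU]; linarith
    have hc := hcut U hu hv
    have hflip : (∑ a ∈ U, ∑ b ∈ Uᶜ, (m a b : ℤ)) = ∑ a ∈ Uᶜ, ∑ b ∈ U, (m a b : ℤ) := by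
      rw [Finset.sum_comm]
      exact Finset.sum_congr rfl fun a _ => Finset.sum_congr rfl fun b _ => by
        rw [hsymm]
    have hlb : (∑ a ∈ Uᶜ, ∑ b ∈ U, (m a b : ℤ)) ≤
        ∑ a ∈ Uᶜ, ∑ b ∈ U, (m a b : ℤ) * (x a - x b) := by
      refine Finset.sum_le_sum fun a ha => Finset.sum_le_sum fun b hb => ?_
      have h1 : ¬ (x a ≤ x u) := by simpa [hU] using ha
      have h2 : x b ≤ x u := by simpa [hU] using hb
      have h3 : (0:ℤ) ≤ (m a b : ℤ) := Int.natCast_nonneg _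
      nlinarith
    have hslap := sum_lap_eq m hsymm x Uᶜ
    rw [compl_compl] at hslap
    have hub : ∑ w ∈ Uᶜ, lap m x w ≤ ∑ w ∈ Uᶜ, D w :=
      Finset.sum_le_sum fun w _ => hle w
    have hdeg : ∑ w ∈ Uᶜ, D w ≤ divDeg D :=
      Finset.sum_le_sum_of_subset_of_nonneg (Finset.subset_univ _) fun i _ _ => hD i
    rw [hflip] at hc
    linarith
  · -- x v < x u : use U = {w | x v < x w}
    set U : Finset V := Finset.univ.filter (fun w => x v < x w) with hU
    have hu : u ∈ U := by simp [hU]; linarith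
    have hv : v ∉ U := by simp [hU]
    have hc := hcut U hu hv
    have hlb : (∑ a ∈ U, ∑ b ∈ Uᶜ, (m a b : ℤ)) ≤
        ∑ a ∈ U, ∑ b ∈ Uᶜ, (m a b : ℤ) * (x a - x b) := by
      refine Finset.sum_le_sum fun a ha => Finset.sum_le_sum fun b hb => ?_
      have h1 : x v < x a := by simpa [hU] using ha
      have h2 : ¬ (x v < x b) := by simpa [hU] using hb
      have h3 : (0:ℤ) ≤ (m a b : ℤ) := Int.natCast_nonneg _
      nlinarith
    have hslap := sum_lap_eq m hsymm x U
    have hub : ∑ w ∈ U, lap m x w ≤ ∑ w ∈ U, D w :=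
      Finset.sum_le_sum fun w _ => hle w
    have hdeg : ∑ w ∈ U, D w ≤ divDeg D :=
      Finset.sum_le_sum_of_subset_of_nonneg (Finset.subset_univ _) fun i _ _ => hD i
    linarith
end
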